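/- arXiv:1910.07208 — 4 statements merged into one kernel-verified Lean document; each statement's English description precedes it below -/
import Mathlib

section
/- Let α_1, ..., α_n be complex numbers with Σ|α_i|^2 ≤ U_2 and second Newton sum S_2 = Σ α_i^2 a real number. Then the third Newton sum S_3 = Σ α_i^3 satisfies |S_3|^2 ≤ ((S_2 + U_2)/2) · (S_4' + 2(U_2 - S_2)^2), where S_4' = Σ α_i^4, provided S_4' is real. (This is Cauchy–Schwarz type inequality used in the sieve.) -/
private lemma re_pow2 (z : ℂ) : (z ^ 2).re = z.re ^ 2 - z.im ^ 2 := by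
  simp [pow_succ, Complex.mul_re, Complex.mul_im]

private lemma re_pow3 (z : ℂ) : (z ^ 3).re = z.re ^ 3 - 3 * z.re * z.im ^ 2 := by
  simp [pow_succ, Complex.mul_re, Complex.mul_im]; ring

private lemma re_pow4 (z : ℂ) :
    (z ^ 4).re = z.re ^ 4 - 6 * z.re ^ 2 * z.im ^ 2 + z.im ^ 4 := by
  simp [pow_succ, Complex.mul_re, Complex.mul_im]; ring

theorem S3_bound (n : ℕ) (α : Fin n → ℂ) (U₂ S₂ S₃ S₄ : ℝ)
    (hU : ∑ i, ‖α i‖ ^ 2 ≤ U₂)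
    (hS2 : ∑ i, α i ^ 2 = (S₂ : ℂ))
    (hS3 : ∑ i, α i ^ 3 = (S₃ : ℂ))
    (hS4 : ∑ i, α i ^ 4 = (S₄ : ℂ)) :
    |S₃| ^ 2 ≤ (S₂ + U₂) / 2 * (S₄ + 2 * (U₂ - S₂) ^ 2) := by
  set x : Fin n → ℝ := fun i => (α i).re with hx
  set y : Fin n → ℝ := fun i => (α i).im with hy
  have habs : ∀ i, ‖α i‖ ^ 2 = x i ^ 2 + y i ^ 2 := by
    intro i
    rw [Complex.sq_norm, Complex.normSq_apply]
    ring
  have hT : ∑ i, (x i ^ 2 + y i ^ 2) ≤ U₂ := by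
    calc ∑ i, (x i ^ 2 + y i ^ 2) = ∑ i, ‖α i‖ ^ 2 := by
          simp_rw [habs]
      _ ≤ U₂ := hU
  have h2 : ∑ i, (x i ^ 2 - y i ^ 2) = S₂ := by
    have := congrArg Complex.re hS2
    simpa [Complex.re_sum, re_pow2] using this
  have h3 : ∑ i, (x i ^ 3 - 3 * x i * y i ^ 2) = S₃ := by
    have := congrArg Complex.re hS3
    simpa [Complex.re_sum, re_pow3] using this
  have h4 : ∑ i, (x i ^ 4 - 6 * x i ^ 2 * y i ^ 2 + y i ^ 4) = S₄ := by
    have := congrArg Complex.re hS4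
    simpa [Complex.re_sum, re_pow4] using this
  set A := ∑ i, x i ^ 2 with hA
  set B := ∑ i, y i ^ 2 with hB
  have hAnn : 0 ≤ A := Finset.sum_nonneg fun i _ => sq_nonneg _
  have hBnn : 0 ≤ B := Finset.sum_nonneg fun i _ => sq_nonneg _
  have hAB : A + B ≤ U₂ := by
    simpa [Finset.sum_add_distrib] using hT
  have hABS : A - B = S₂ := by
    simpa [Finset.sum_sub_distrib] using h2
  -- Cauchy-Schwarz
  have hCS : S₃ ^ 2 ≤ A * ∑ i, (x i ^ 2 - 3 * y i ^ 2) ^ 2 := by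
    have := Finset.sum_mul_sq_le_sq_mul_sq Finset.univ x
      (fun i => x i ^ 2 - 3 * y i ^ 2)
    calc S₃ ^ 2 = (∑ i, x i * (x i ^ 2 - 3 * y i ^ 2)) ^ 2 := by
          rw [← h3]; congr 1; apply Finset.sum_congr rfl; intro i _; ring
      _ ≤ A * ∑ i, (x i ^ 2 - 3 * y i ^ 2) ^ 2 := this
  have hexp : ∑ i, (x i ^ 2 - 3 * y i ^ 2) ^ 2 = S₄ + 8 * ∑ i, (y i ^ 2) ^ 2 := by
    rw [← h4, Finset.mul_sum, ← Finset.sum_add_distrib]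
    apply Finset.sum_congr rfl; intro i _; ring
  have hy4 : ∑ i, (y i ^ 2) ^ 2 ≤ B ^ 2 :=
    Finset.sum_sq_le_sq_sum_of_nonneg fun i _ => sq_nonneg _
  have hQnn : 0 ≤ S₄ + 8 * ∑ i, (y i ^ 2) ^ 2 := by
    rw [← hexp]; exact Finset.sum_nonneg fun i _ => sq_nonneg _
  have hAle : A ≤ (S₂ + U₂) / 2 := by linarith
  have hBle : B ≤ (U₂ - S₂) / 2 := by linarith
  have hB2 : 8 * ∑ i, (y i ^ 2) ^ 2 ≤ 2 * (U₂ - S₂) ^ 2 := by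
    have : B ^ 2 ≤ ((U₂ - S₂) / 2) ^ 2 := by
      apply sq_le_sq' <;> nlinarith
    nlinarith
  have key : S₃ ^ 2 ≤ (S₂ + U₂) / 2 * (S₄ + 2 * (U₂ - S₂) ^ 2) := by
    calc S₃ ^ 2 ≤ A * (S₄ + 8 * ∑ i, (y i ^ 2) ^ 2) := by rw [← hexp]; exact hCS
      _ ≤ (S₂ + U₂) / 2 * (S₄ + 8 * ∑ i, (y i ^ 2) ^ 2) :=
          mul_le_mul_of_nonneg_right hAle hQnn
      _ ≤ (S₂ + U₂) / 2 * (S₄ + 2 * (U₂ - S₂) ^ 2) := by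
          apply mul_le_mul_of_nonneg_left (by linarith) (by linarith)
  calc |S₃| ^ 2 = S₃ ^ 2 := sq_abs _
    _ ≤ _ := key
end

section
/- Let α_1, ..., α_n be complex numbers, each either real or occurring together with its complex conjugate, such that Σ|α_i|^2 ≤ U_2 and S_2 = Σ α_i^2. Then S_4 = Σ α_i^4 ≥ −2(U_2 − S_2)^2. -/
theorem S4_lower_bound (n : ℕ) (α : Fin n → ℂ)
    (hconj : ∃ σ : Equiv.Perm (Fin n), ∀ i, α (σ i) = starRingEnd ℂ (α i))
    (U₂ S₂ S₄ : ℝ)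
    (hU : ∑ i, ‖α i‖ ^ 2 ≤ U₂)
    (hS2 : ∑ i, α i ^ 2 = (S₂ : ℂ))
    (hS4 : ∑ i, α i ^ 4 = (S₄ : ℂ)) :
    S₄ ≥ -2 * (U₂ - S₂) ^ 2 := by
  set x : Fin n → ℝ := fun i => (α i).re with hx
  set y : Fin n → ℝ := fun i => (α i).im with hy
  have hS2' : ∑ i, (x i ^ 2 - y i ^ 2) = S₂ := by
    have := congrArg Complex.re hS2
    rw [Complex.re_sum] at this
    simpa [pow_two, Complex.mul_re, hx, hy, sq] using this
  have hS4' : ∑ i, (x i ^ 4 - 6 * x i ^ 2 * y i ^ 2 + y i ^ 4) = S₄ := by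
    have := congrArg Complex.re hS4
    rw [Complex.re_sum, Complex.ofReal_re] at this
    rw [← this]
    apply Finset.sum_congr rfl
    intro i _
    have : α i ^ 4 = Complex.mk (x i ^ 4 - 6 * x i ^ 2 * y i ^ 2 + y i ^ 4)
        (4 * x i ^ 3 * y i - 4 * x i * y i ^ 3) := by
      apply Complex.ext <;> simp [hx, hy, pow_succ, Complex.mul_re, Complex.mul_im] <;> ring
    rw [this]
  have habs : ∑ i, ‖α i‖ ^ 2 = ∑ i, (x i ^ 2 + y i ^ 2) := by
    apply Finset.sum_congr rfl
    intro i _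
    rw [Complex.sq_norm, Complex.normSq_apply]
    ring
  have hY : 2 * ∑ i, y i ^ 2 ≤ U₂ - S₂ := by
    rw [habs] at hU
    rw [← hS2']
    have key : ∑ i, (x i ^ 2 + y i ^ 2) - ∑ i, (x i ^ 2 - y i ^ 2) = 2 * ∑ i, y i ^ 2 := by
      rw [← Finset.sum_sub_distrib, Finset.mul_sum]
      apply Finset.sum_congr rfl
      intro i _; ring
    linarith
  have hYnn : (0:ℝ) ≤ ∑ i, y i ^ 2 :=
    Finset.sum_nonneg fun i _ => sq_nonneg _
  have h1 : ∑ i, (-8 * (y i ^ 2) ^ 2) ≤ S₄ := by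
    rw [← hS4']
    apply Finset.sum_le_sum
    intro i _
    nlinarith [sq_nonneg (x i ^ 2 - 3 * y i ^ 2)]
  have h2 : ∑ i, (y i ^ 2) ^ 2 ≤ (∑ i, y i ^ 2) ^ 2 := by
    apply Finset.sum_sq_le_sq_sum_of_nonneg
    intro i _; exact sq_nonneg _
  rw [← Finset.mul_sum, neg_mul] at h1
  nlinarith [hY, hYnn, h1, h2]
end

section
/- The polynomial x^9 − 6x^7 − 9x^6 − 2x^5 + 21x^4 + 35x^3 + 23x^2 + 7x + 1 is irreducible over ℚ and has exactly 3 real roots. -/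
/-!
Modulo 2 the polynomial becomes `X⁹ + X⁶ + X⁴ + X³ + X² + X + 1`, which is coprime to
`X ^ 2 ^ d - X` for `d ≤ 4`; since every irreducible polynomial of degree `d` over `𝔽₂` divides
`X ^ 2 ^ d - X`, it has no factor of degree `≤ 4` and is irreducible (Rabin's test). A monic
integer polynomial irreducible modulo a prime is irreducible over `ℚ`.

Over `ℝ` the polynomial increases on `(-∞, -3/2]`, is positive on `[-3/2, 8/5]`, decreases on
`[8/5, 2]`, is negative on `[2, 13/5]` and increases on `[13/5, ∞)`; it changes sign on each of
the three monotone pieces, so it has exactly one root in each of them.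
-/

open Polynomial Set

namespace Polynomial

theorem irreducible_of_forall_isCoprime_X_pow_card_pow_sub_X {K : Type*} [Field K] [Finite K]
    {f : K[X]} (hf0 : f ≠ 0) (hfu : ¬IsUnit f)
    (hcop : ∀ d ∈ Finset.Ioc 0 (f.natDegree / 2), IsCoprime f (X ^ Nat.card K ^ d - X)) :
    Irreducible f := by
  refine (irreducible_iff_lt_natDegree_lt hf0 hfu).2 fun q hq hqdeg hqf => ?_
  have hq0 : 0 < q.natDegree := (Finset.mem_Ioc.1 hqdeg).1
  obtain ⟨g, hg, hgq⟩ :=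
    WfDvdMonoid.exists_irreducible_factor (not_isUnit_of_natDegree_pos q hq0) hq.ne_zero
  have hgdeg : g.natDegree ∈ Finset.Ioc 0 (f.natDegree / 2) :=
    Finset.mem_Ioc.2 ⟨hg.natDegree_pos,
      (natDegree_le_of_dvd hgq hq.ne_zero).trans (Finset.mem_Ioc.1 hqdeg).2⟩
  exact hg.not_isUnit <| (hcop _ hgdeg).isUnit_of_dvd' (hgq.trans hqf)
    (hg.natDegree_dvd_iff_dvd_X_pow_card_pow_sub_X.1 dvd_rfl)

theorem strictMonoOn_eval_of_derivative_pos {p : ℝ[X]} {s : Set ℝ} (hs : Convex ℝ s)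
    (h : ∀ x ∈ s, 0 < p.derivative.eval x) : StrictMonoOn (fun x => p.eval x) s :=
  strictMonoOn_of_deriv_pos hs p.continuous.continuousOn fun x hx => by
    rw [Polynomial.deriv]; exact h x (interior_subset hx)

theorem strictAntiOn_eval_of_derivative_neg {p : ℝ[X]} {s : Set ℝ} (hs : Convex ℝ s)
    (h : ∀ x ∈ s, p.derivative.eval x < 0) : StrictAntiOn (fun x => p.eval x) s :=
  strictAntiOn_of_deriv_neg hs p.continuous.continuousOn fun x hx => by
    rw [Polynomial.deriv]; exact h x (interior_subset hx)

end Polynomial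

noncomputable def nonic (R : Type*) [CommRing R] : R[X] :=
  X ^ 9 - 6 * X ^ 7 - 9 * X ^ 6 - 2 * X ^ 5 + 21 * X ^ 4 + 35 * X ^ 3 + 23 * X ^ 2 + 7 * X + 1

section General

variable {R : Type*} [CommRing R]

theorem map_nonic {S : Type*} [CommRing S] (φ : R →+* S) : (nonic R).map φ = nonic S := by
  simp [nonic, Polynomial.map_ofNat]

theorem eval_nonic (x : R) : (nonic R).eval x =
    x ^ 9 - 6 * x ^ 7 - 9 * x ^ 6 - 2 * x ^ 5 + 21 * x ^ 4 + 35 * x ^ 3 + 23 * x ^ 2 + 7 * x + 1 := by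
  simp [nonic]

theorem eval_derivative_nonic (x : R) : (derivative (nonic R)).eval x =
    9 * x ^ 8 - 42 * x ^ 6 - 54 * x ^ 5 - 10 * x ^ 4 + 84 * x ^ 3 + 105 * x ^ 2 + 46 * x + 7 := by
  simp only [nonic, derivative_add, derivative_sub, derivative_mul, derivative_X_pow, derivative_X,
    derivative_ofNat, derivative_one, eval_add, eval_sub, eval_mul, eval_pow, eval_X, eval_C,
    eval_ofNat, eval_one, eval_zero]
  push_cast
  ring

theorem monic_nonic : (nonic R).Monic := by
  unfold nonic; monicity!

theorem natDegree_nonic [Nontrivial R] : (nonic R).natDegree = 9 := by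
  unfold nonic; compute_degree!

end General

theorem nonic_zmod_two : nonic (ZMod 2) = X ^ 9 + X ^ 6 + X ^ 4 + X ^ 3 + X ^ 2 + X + 1 := by
  unfold nonic
  reduce_mod_char

theorem irreducible_nonic_zmod_two : Irreducible (nonic (ZMod 2)) := by
  refine irreducible_of_forall_isCoprime_X_pow_card_pow_sub_X monic_nonic.ne_zero
    (not_isUnit_of_natDegree_pos _ (by rw [natDegree_nonic]; norm_num)) fun d hd => ?_
  rw [natDegree_nonic, Finset.mem_Ioc] at hd
  obtain ⟨hd0, hd4⟩ := hd
  rw [Nat.card_zmod, nonic_zmod_two]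
  interval_cases d
  -- Bézout coefficients from the extended Euclidean algorithm over `𝔽₂`
  · exact ⟨1, 1 + X ^ 2 + X ^ 5 + X ^ 6 + X ^ 7, by ring_nf; reduce_mod_char⟩
  · exact ⟨1 + X + X ^ 3, X ^ 2 + X ^ 3 + X ^ 5 + X ^ 6 + X ^ 8, by ring_nf; reduce_mod_char⟩
  · exact ⟨1 + X + X ^ 6, X ^ 4 + X ^ 7, by ring_nf; reduce_mod_char⟩
  · exact ⟨1 + X + X ^ 2 + X ^ 8 + X ^ 9 + X ^ 10 + X ^ 12 + X ^ 13 + X ^ 15,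
      X + X ^ 2 + X ^ 3 + X ^ 6 + X ^ 8, by ring_nf; reduce_mod_char⟩

theorem irreducible_nonic_rat : Irreducible (nonic ℚ) := by
  rw [← map_nonic (Int.castRingHom ℚ),
    ← IsPrimitive.Int.irreducible_iff_irreducible_map_cast monic_nonic.isPrimitive]
  refine monic_nonic.irreducible_of_irreducible_map (Int.castRingHom (ZMod 2)) _ ?_
  rw [map_nonic]
  exact irreducible_nonic_zmod_two

section Real

variable {x : ℝ}

/- Each sign bound below is a positive combination of the products `(x - a) ^ i * (b - x) ^ (n - i)`
on `[a, b]` (of the powers of the distance to the endpoint on a half-line), found by `linarith`. -/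

theorem derivative_nonic_pos_of_le (hx : x ≤ -3 / 2) : 0 < (derivative (nonic ℝ)).eval x := by
  have ht : 0 ≤ -3 / 2 - x := by linarith
  rw [eval_derivative_nonic]
  linarith [pow_nonneg ht 2, pow_nonneg ht 3, pow_nonneg ht 4, pow_nonneg ht 5,
    pow_nonneg ht 6, pow_nonneg ht 7, pow_nonneg ht 8]

theorem derivative_nonic_pos_of_ge (hx : 13 / 5 ≤ x) : 0 < (derivative (nonic ℝ)).eval x := by
  have ht : 0 ≤ x - 13 / 5 := by linarith
  rw [eval_derivative_nonic]
  linarith [pow_nonneg ht 2, pow_nonneg ht 3, pow_nonneg ht 4, pow_nonneg ht 5,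
    pow_nonneg ht 6, pow_nonneg ht 7, pow_nonneg ht 8]

theorem derivative_nonic_neg_of_mem_Icc (hx : x ∈ Icc (8 / 5) 2) :
    (derivative (nonic ℝ)).eval x < 0 := by
  have ht : 0 ≤ x - 8 / 5 := by linarith [hx.1]
  have hs : 0 ≤ 2 - x := by linarith [hx.2]
  rw [eval_derivative_nonic]
  linarith [mul_nonneg ht (pow_nonneg hs 7), mul_nonneg (pow_nonneg ht 2) (pow_nonneg hs 6),
    mul_nonneg (pow_nonneg ht 3) (pow_nonneg hs 5), mul_nonneg (pow_nonneg ht 4) (pow_nonneg hs 4),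
    mul_nonneg (pow_nonneg ht 5) (pow_nonneg hs 3), mul_nonneg (pow_nonneg ht 6) (pow_nonneg hs 2),
    mul_nonneg (pow_nonneg ht 7) hs, pow_nonneg ht 8, pow_nonneg hs 8]

theorem nonic_neg_of_mem_Icc (hx : x ∈ Icc 2 (13 / 5)) : (nonic ℝ).eval x < 0 := by
  have ht : 0 ≤ x - 2 := by linarith [hx.1]
  have hs : 0 ≤ 13 / 5 - x := by linarith [hx.2]
  rw [eval_nonic]
  linarith [mul_nonneg ht (pow_nonneg hs 8), mul_nonneg (pow_nonneg ht 2) (pow_nonneg hs 7),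
    mul_nonneg (pow_nonneg ht 3) (pow_nonneg hs 6), mul_nonneg (pow_nonneg ht 4) (pow_nonneg hs 5),
    mul_nonneg (pow_nonneg ht 5) (pow_nonneg hs 4), mul_nonneg (pow_nonneg ht 6) (pow_nonneg hs 3),
    mul_nonneg (pow_nonneg ht 7) (pow_nonneg hs 2), mul_nonneg (pow_nonneg ht 8) hs,
    pow_nonneg ht 9, pow_nonneg hs 9]

theorem nonic_pos_of_mem_Icc (hx : x ∈ Icc (-3 / 2) (8 / 5)) : 0 < (nonic ℝ).eval x := by
  -- no such certificate exists on the whole interval, only on these three pieces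
  have hpieces : (0 ≤ x + 3 / 2 ∧ 0 ≤ -29 / 40 - x) ∨ (0 ≤ x + 29 / 40 ∧ 0 ≤ 1 / 20 - x) ∨
      (0 ≤ x - 1 / 20 ∧ 0 ≤ 8 / 5 - x) := by
    obtain ⟨hl, hr⟩ := hx
    rcases le_total x (-29 / 40) with h₁ | h₁
    · exact Or.inl ⟨by linarith, by linarith⟩
    rcases le_total x (1 / 20) with h₂ | h₂
    · exact Or.inr (Or.inl ⟨by linarith, by linarith⟩)
    · exact Or.inr (Or.inr ⟨by linarith, by linarith⟩)
  rw [eval_nonic]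
  rcases hpieces with ⟨ht, hs⟩ | ⟨ht, hs⟩ | ⟨ht, hs⟩ <;>
  linarith [mul_nonneg ht (pow_nonneg hs 8), mul_nonneg (pow_nonneg ht 2) (pow_nonneg hs 7),
    mul_nonneg (pow_nonneg ht 3) (pow_nonneg hs 6), mul_nonneg (pow_nonneg ht 4) (pow_nonneg hs 5),
    mul_nonneg (pow_nonneg ht 5) (pow_nonneg hs 4), mul_nonneg (pow_nonneg ht 6) (pow_nonneg hs 3),
    mul_nonneg (pow_nonneg ht 7) (pow_nonneg hs 2), mul_nonneg (pow_nonneg ht 8) hs,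
    pow_nonneg ht 9, pow_nonneg hs 9]

theorem mem_of_isRoot_nonic (hx : (nonic ℝ).IsRoot x) :
    x ≤ -3 / 2 ∨ x ∈ Icc (8 / 5) 2 ∨ 13 / 5 ≤ x := by
  by_contra! h
  obtain ⟨h₁, h₂, h₃⟩ := h
  rcases lt_or_ge x (8 / 5) with h₄ | h₄
  · exact (nonic_pos_of_mem_Icc ⟨h₁.le, h₄.le⟩).ne' hx
  · exact (nonic_neg_of_mem_Icc ⟨le_of_not_ge fun h₅ => h₂ ⟨h₄, h₅⟩, h₃.le⟩).ne hx

theorem exists_roots_nonic_real :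
    ∃ r₁ r₂ r₃ : ℝ, r₁ < r₂ ∧ r₂ < r₃ ∧ (nonic ℝ).roots.toFinset = {r₁, r₂, r₃} := by
  have hcont {a b : ℝ} : ContinuousOn (fun x => (nonic ℝ).eval x) (Icc a b) :=
    (nonic ℝ).continuous.continuousOn
  obtain ⟨r₁, ⟨-, hr₁⟩, hroot₁⟩ := intermediate_value_Ioo (by norm_num : (-17 / 10 : ℝ) ≤ -3 / 2)
    hcont (show (0 : ℝ) ∈ Ioo _ _ by simp only [mem_Ioo, eval_nonic]; norm_num)
  obtain ⟨r₂, hr₂, hroot₂⟩ := intermediate_value_Ioo' (by norm_num : (8 / 5 : ℝ) ≤ 2)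
    hcont (show (0 : ℝ) ∈ Ioo _ _ by simp only [mem_Ioo, eval_nonic]; norm_num)
  obtain ⟨r₃, ⟨hr₃, -⟩, hroot₃⟩ := intermediate_value_Ioo (by norm_num : (13 / 5 : ℝ) ≤ 3)
    hcont (show (0 : ℝ) ∈ Ioo _ _ by simp only [mem_Ioo, eval_nonic]; norm_num)
  have hmono₁ := strictMonoOn_eval_of_derivative_pos (convex_Iic _)
    fun x (hx : x ≤ -3 / 2) => derivative_nonic_pos_of_le hx
  have hanti := strictAntiOn_eval_of_derivative_neg (convex_Icc _ _)
    fun x hx => derivative_nonic_neg_of_mem_Icc hx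
  have hmono₃ := strictMonoOn_eval_of_derivative_pos (convex_Ici _)
    fun x (hx : 13 / 5 ≤ x) => derivative_nonic_pos_of_ge hx
  refine ⟨r₁, r₂, r₃, by linarith [hr₂.1], by linarith [hr₂.2], Finset.ext fun x => ?_⟩
  simp only [Multiset.mem_toFinset, mem_roots monic_nonic.ne_zero, Finset.mem_insert,
    Finset.mem_singleton]
  refine ⟨fun hx => ?_, by rintro (rfl | rfl | rfl) <;> assumption⟩
  rcases mem_of_isRoot_nonic hx with h | h | h
  · exact Or.inl (hmono₁.injOn h hr₁.le (hx.trans hroot₁.symm))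
  · exact Or.inr (Or.inl (hanti.injOn h (Ioo_subset_Icc_self hr₂) (hx.trans hroot₂.symm)))
  · exact Or.inr (Or.inr (hmono₃.injOn h hr₃.le (hx.trans hroot₃.symm)))

end Real

theorem poly2_irreducible_three_real_roots :
    Irreducible (X ^ 9 - 6 * X ^ 7 - 9 * X ^ 6 - 2 * X ^ 5 + 21 * X ^ 4 +
      35 * X ^ 3 + 23 * X ^ 2 + 7 * X + 1 : ℚ[X]) ∧
    ((X ^ 9 - 6 * X ^ 7 - 9 * X ^ 6 - 2 * X ^ 5 + 21 * X ^ 4 +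
      35 * X ^ 3 + 23 * X ^ 2 + 7 * X + 1 : ℚ[X]).map
        (algebraMap ℚ ℝ)).roots.toFinset.card = 3 := by
  change Irreducible (nonic ℚ) ∧ ((nonic ℚ).map (algebraMap ℚ ℝ)).roots.toFinset.card = 3
  obtain ⟨r₁, r₂, r₃, h₁₂, h₂₃, hroots⟩ := exists_roots_nonic_real
  rw [map_nonic, hroots]
  exact ⟨irreducible_nonic_rat,
    Finset.card_eq_three.2 ⟨r₁, r₂, r₃, h₁₂.ne, (h₁₂.trans h₂₃).ne, h₂₃.ne, rfl⟩⟩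
end

section
/- The number fields defined by p(x) = x^9 − 4x^7 − 4x^6 + 2x^5 + 5x^4 + 6x^3 + 8x^2 + 4x + 1 and q(x) = x^9 − 6x^7 − 9x^6 − 2x^5 + 21x^4 + 35x^3 + 23x^2 + 7x + 1 are not isomorphic. -/
open Polynomial

instance : Fact (Nat.Prime 11) := ⟨by norm_num⟩

-- no root of p in ℚ_[11]
lemma p_no_root (x : ℚ_[11]) :
    x ^ 9 - 4 * x ^ 7 - 4 * x ^ 6 + 2 * x ^ 5 + 5 * x ^ 4 +
      6 * x ^ 3 + 8 * x ^ 2 + 4 * x + 1 ≠ 0 := by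
  intro h
  -- first: ‖x‖ ≤ 1
  have hx : ‖x‖ ≤ 1 := by
    by_contra hgt
    push_neg at hgt
    have hx0 : x ≠ 0 := by rintro rfl; rw [norm_zero] at hgt; linarith
    obtain ⟨n, hn⟩ : ∃ n : ℤ, ‖x‖ = (((11 : ℚ) ^ (-n) : ℚ) : ℝ) := by
      obtain ⟨n, hn⟩ := padicNormE.image' (p := 11) hx0
      simp only [Nat.cast_ofNat] at hn
      exact ⟨n, by rw [← hn]; rfl⟩
    have hn' : ‖x‖ = (11 : ℝ) ^ (-n) := by rw [hn]; push_cast; ring_nf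
    have hge : (11 : ℝ) ≤ ‖x‖ := by
      rw [hn'] at hgt ⊢
      have h1 : (1 : ℝ) < 11 := by norm_num
      have : (0 : ℤ) < -n := by
        by_contra hc
        push_neg at hc
        exact absurd (zpow_le_one_of_nonpos₀ h1.le hc) (not_le.mpr hgt)
      calc (11 : ℝ) = (11 : ℝ) ^ (1 : ℤ) := by norm_num
        _ ≤ (11 : ℝ) ^ (-n) := by
            apply zpow_le_zpow_right₀ h1.le; omega
    have heq : x ^ 9 = 4 * x ^ 7 + 4 * x ^ 6 - 2 * x ^ 5 - 5 * x ^ 4 -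
        6 * x ^ 3 - 8 * x ^ 2 - 4 * x - 1 := by linear_combination h
    have hone : (1 : ℝ) ≤ ‖x‖ := le_trans (by norm_num) hge
    have hpow : ∀ k : ℕ, k ≤ 7 → ‖x‖ ^ k ≤ ‖x‖ ^ 7 :=
      fun k hk => pow_le_pow_right₀ hone hk
    have hc : ∀ m : ℤ, ‖(m : ℚ_[11])‖ ≤ 1 := Padic.norm_int_le_one
    have hterm : ∀ (m : ℤ) (k : ℕ), k ≤ 7 → ‖(m : ℚ_[11]) * x ^ k‖ ≤ ‖x‖ ^ 7 := by
      intro m k hk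
      rw [norm_mul, norm_pow]
      calc ‖(m : ℚ_[11])‖ * ‖x‖ ^ k ≤ 1 * ‖x‖ ^ k := by
            apply mul_le_mul_of_nonneg_right (hc m) (by positivity)
        _ = ‖x‖ ^ k := by ring
        _ ≤ ‖x‖ ^ 7 := hpow k hk
    have hrhs : ‖x ^ 9‖ ≤ 8 * ‖x‖ ^ 7 := by
      rw [heq]
      have e1 : (4 : ℚ_[11]) * x ^ 7 + 4 * x ^ 6 - 2 * x ^ 5 - 5 * x ^ 4 -
          6 * x ^ 3 - 8 * x ^ 2 - 4 * x - 1 =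
          ((4 : ℤ) : ℚ_[11]) * x ^ 7 + ((4 : ℤ) : ℚ_[11]) * x ^ 6 +
          ((-2 : ℤ) : ℚ_[11]) * x ^ 5 + ((-5 : ℤ) : ℚ_[11]) * x ^ 4 +
          ((-6 : ℤ) : ℚ_[11]) * x ^ 3 + ((-8 : ℤ) : ℚ_[11]) * x ^ 2 +
          ((-4 : ℤ) : ℚ_[11]) * x ^ 1 + ((-1 : ℤ) : ℚ_[11]) * x ^ 0 := by
        push_cast; ring
      rw [e1]
      calc ‖((4 : ℤ) : ℚ_[11]) * x ^ 7 + ((4 : ℤ) : ℚ_[11]) * x ^ 6 +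
          ((-2 : ℤ) : ℚ_[11]) * x ^ 5 + ((-5 : ℤ) : ℚ_[11]) * x ^ 4 +
          ((-6 : ℤ) : ℚ_[11]) * x ^ 3 + ((-8 : ℤ) : ℚ_[11]) * x ^ 2 +
          ((-4 : ℤ) : ℚ_[11]) * x ^ 1 + ((-1 : ℤ) : ℚ_[11]) * x ^ 0‖
          ≤ ‖((4 : ℤ) : ℚ_[11]) * x ^ 7 + ((4 : ℤ) : ℚ_[11]) * x ^ 6 +
          ((-2 : ℤ) : ℚ_[11]) * x ^ 5 + ((-5 : ℤ) : ℚ_[11]) * x ^ 4 +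
          ((-6 : ℤ) : ℚ_[11]) * x ^ 3 + ((-8 : ℤ) : ℚ_[11]) * x ^ 2 +
          ((-4 : ℤ) : ℚ_[11]) * x ^ 1‖ + ‖((-1 : ℤ) : ℚ_[11]) * x ^ 0‖ := norm_add_le _ _
        _ ≤ 8 * ‖x‖ ^ 7 := by
          have key : ‖((4 : ℤ) : ℚ_[11]) * x ^ 7 + ((4 : ℤ) : ℚ_[11]) * x ^ 6 +
              ((-2 : ℤ) : ℚ_[11]) * x ^ 5 + ((-5 : ℤ) : ℚ_[11]) * x ^ 4 +
              ((-6 : ℤ) : ℚ_[11]) * x ^ 3 + ((-8 : ℤ) : ℚ_[11]) * x ^ 2 +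
              ((-4 : ℤ) : ℚ_[11]) * x ^ 1‖ ≤
              ‖x‖ ^ 7 + ‖x‖ ^ 7 + ‖x‖ ^ 7 + ‖x‖ ^ 7 + ‖x‖ ^ 7 + ‖x‖ ^ 7 + ‖x‖ ^ 7 := by
            refine (norm_add_le _ _).trans (add_le_add ?_ (hterm _ 1 (by norm_num)))
            refine (norm_add_le _ _).trans (add_le_add ?_ (hterm _ 2 (by norm_num)))
            refine (norm_add_le _ _).trans (add_le_add ?_ (hterm _ 3 (by norm_num)))
            refine (norm_add_le _ _).trans (add_le_add ?_ (hterm _ 4 (by norm_num)))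
            refine (norm_add_le _ _).trans (add_le_add ?_ (hterm _ 5 (by norm_num)))
            exact (norm_add_le _ _).trans
              (add_le_add (hterm _ 7 (by norm_num)) (hterm _ 6 (by norm_num)))
          have last : ‖((-1 : ℤ) : ℚ_[11]) * x ^ 0‖ ≤ ‖x‖ ^ 7 := hterm _ 0 (by norm_num)
          linarith
    have : ‖x‖ ^ 9 ≤ 8 * ‖x‖ ^ 7 := by rwa [norm_pow] at hrhs
    have hlt : 8 * ‖x‖ ^ 7 < ‖x‖ ^ 9 := by
      have h7 : (0:ℝ) < ‖x‖ ^ 7 := by positivity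
      have h121 : (121 : ℝ) ≤ ‖x‖ * ‖x‖ := by nlinarith
      calc 8 * ‖x‖ ^ 7 < 121 * ‖x‖ ^ 7 := by nlinarith
        _ ≤ (‖x‖ * ‖x‖) * ‖x‖ ^ 7 := mul_le_mul_of_nonneg_right h121 h7.le
        _ = ‖x‖ ^ 9 := by ring
    linarith
  -- now x is a padic integer
  set z : ℤ_[11] := ⟨x, hx⟩ with hzdef
  have hz : (z ^ 9 - 4 * z ^ 7 - 4 * z ^ 6 + 2 * z ^ 5 + 5 * z ^ 4 +
      6 * z ^ 3 + 8 * z ^ 2 + 4 * z + 1 : ℤ_[11]) = 0 := by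
    have hcoe : ((z ^ 9 - 4 * z ^ 7 - 4 * z ^ 6 + 2 * z ^ 5 + 5 * z ^ 4 +
        6 * z ^ 3 + 8 * z ^ 2 + 4 * z + 1 : ℤ_[11]) : ℚ_[11]) = 0 := by
      push_cast
      exact h
    exact PadicInt.coe_eq_zero.mp hcoe
  have hy := congrArg (PadicInt.toZMod (p := 11)) hz
  simp only [map_sub, map_add, map_mul, map_pow, map_one, map_ofNat, map_zero] at hy
  revert hy
  exact (by decide : ∀ y : ZMod 11, ¬(y ^ 9 - 4 * y ^ 7 - 4 * y ^ 6 + 2 * y ^ 5 + 5 * y ^ 4 +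
      6 * y ^ 3 + 8 * y ^ 2 + 4 * y + 1 = 0)) (PadicInt.toZMod z)

theorem fields_not_isomorphic :
    IsEmpty (AdjoinRoot (X ^ 9 - 4 * X ^ 7 - 4 * X ^ 6 + 2 * X ^ 5 + 5 * X ^ 4 +
        6 * X ^ 3 + 8 * X ^ 2 + 4 * X + 1 : ℚ[X]) ≃+*
      AdjoinRoot (X ^ 9 - 6 * X ^ 7 - 9 * X ^ 6 - 2 * X ^ 5 + 21 * X ^ 4 +
        35 * X ^ 3 + 23 * X ^ 2 + 7 * X + 1 : ℚ[X])) := by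
  constructor
  intro e
  -- Hensel's lemma: q has a root in ℤ_[11] near 8
  set F : Polynomial ℤ_[11] := X ^ 9 - 6 * X ^ 7 - 9 * X ^ 6 - 2 * X ^ 5 + 21 * X ^ 4 +
      35 * X ^ 3 + 23 * X ^ 2 + 7 * X + 1 with hF
  have heval : F.eval 8 = ((119315449 : ℤ) : ℤ_[11]) := by
    simp only [hF, eval_add, eval_sub, eval_mul, eval_pow, eval_X, eval_one, eval_ofNat]
    norm_num
  have hderiv : F.derivative.eval 8 = ((138224567 : ℤ) : ℤ_[11]) := by
    simp only [hF, derivative_add, derivative_sub, derivative_mul, derivative_X_pow,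
      derivative_X, derivative_one, derivative_ofNat]
    simp only [eval_add, eval_sub, eval_mul, eval_pow, eval_X, eval_one, eval_ofNat,
      eval_natCast, eval_zero]
    norm_num
  have hnorm : ‖F.eval 8‖ < ‖F.derivative.eval 8‖ ^ 2 := by
    have h1 : ‖F.eval 8‖ < 1 := by
      rw [heval, PadicInt.norm_int_lt_one_iff_dvd]
      norm_num
    have h2 : ‖F.derivative.eval 8‖ = 1 := by
      refine le_antisymm (PadicInt.norm_le_one _) ?_
      by_contra hlt
      push_neg at hlt
      rw [hderiv, PadicInt.norm_int_lt_one_iff_dvd] at hlt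
      norm_num at hlt
    rw [h2]; norm_num [h1]
  obtain ⟨z, hz0, -⟩ := hensels_lemma hnorm
  have hzq : (z : ℚ_[11]) ^ 9 - 6 * (z : ℚ_[11]) ^ 7 - 9 * (z : ℚ_[11]) ^ 6 -
      2 * (z : ℚ_[11]) ^ 5 + 21 * (z : ℚ_[11]) ^ 4 + 35 * (z : ℚ_[11]) ^ 3 +
      23 * (z : ℚ_[11]) ^ 2 + 7 * (z : ℚ_[11]) + 1 = 0 := by
    have : z ^ 9 - 6 * z ^ 7 - 9 * z ^ 6 - 2 * z ^ 5 + 21 * z ^ 4 + 35 * z ^ 3 +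
        23 * z ^ 2 + 7 * z + 1 = 0 := by
      rw [hF] at hz0
      simpa only [coe_aeval_eq_eval, eval_add, eval_sub, eval_mul, eval_pow, eval_X, eval_one, eval_ofNat]
        using hz0
    have hc := congrArg (fun t : ℤ_[11] => (t : ℚ_[11])) this
    push_cast at hc
    exact hc
  have hroot : Polynomial.eval₂ (algebraMap ℚ ℚ_[11]) (z : ℚ_[11])
      (X ^ 9 - 6 * X ^ 7 - 9 * X ^ 6 - 2 * X ^ 5 + 21 * X ^ 4 +
        35 * X ^ 3 + 23 * X ^ 2 + 7 * X + 1 : ℚ[X]) = 0 := by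
    simp only [eval₂_add, eval₂_sub, eval₂_mul, eval₂_pow, eval₂_X, eval₂_one, eval₂_ofNat,
      map_ofNat]
    exact hzq
  set ψ := AdjoinRoot.lift (algebraMap ℚ ℚ_[11]) (z : ℚ_[11]) hroot
  set φ := ψ.comp e.toRingHom with hφ
  set P : ℚ[X] := X ^ 9 - 4 * X ^ 7 - 4 * X ^ 6 + 2 * X ^ 5 + 5 * X ^ 4 +
      6 * X ^ 3 + 8 * X ^ 2 + 4 * X + 1 with hP
  have h0 : P.eval₂ (AdjoinRoot.of P) (AdjoinRoot.root P) = 0 := AdjoinRoot.eval₂_root P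
  have h1 := congrArg φ h0
  rw [Polynomial.hom_eval₂, map_zero] at h1
  have hcomp : φ.comp (AdjoinRoot.of P) = algebraMap ℚ ℚ_[11] := Subsingleton.elim _ _
  rw [hcomp] at h1
  set x := φ (AdjoinRoot.root P) with hx
  rw [hP] at h1
  simp only [eval₂_add, eval₂_sub, eval₂_mul, eval₂_pow, eval₂_X, eval₂_one, eval₂_ofNat,
    map_ofNat] at h1
  exact p_no_root x h1
end
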